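/- Sound and strong completeness with respect to correspondence conditions: let Ax ⊆ {N_◇, C_◇, I_◇□} and let F be the class of all CK-frames satisfying the correspondence condition (A-corr) for each A ∈ Ax, where (Nd-corr) is: for all x, if yRe for all y ≥ x then x = e; (Cd-corr) is: for all x, y, z with y, z not R-related to e and x ≤ y, x ≤ z, there exists w ≥ x with R[w] ⊆ ↓R[y] and R[w] ⊆ ↓R[z]; and (Idb-corr) is: for all x, y, z with xRy ≤ z ≠ e, there exist u, w with x ≤ u, uRw, w ≤ z, and every s ≥ u satisfies sRe or has some t with sRt and z ≤ t. Then for every set Γ of formulas and every formula φ, Γ semantically entails φ on F if and only if Γ ⊢_Ax φ. -/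

import Mathlib

/-- Formulas of the modal language L. -/
inductive Form : Type
  | var : ℕ → Form
  | bot : Form
  | and : Form → Form → Form
  | or : Form → Form → Form
  | imp : Form → Form → Form
  | box : Form → Form
  | dia : Form → Form

namespace Form

/-- Negation abbreviation: ¬φ := φ → ⊥. -/
def neg (φ : Form) : Form := φ.imp bot

/-- Uniform substitution. -/
def subst (σ : ℕ → Form) : Form → Form
  | var p => σ p
  | bot => bot
  | and a b => and (a.subst σ) (b.subst σ)
  | or a b => or (a.subst σ) (b.subst σ)
  | imp a b => imp (a.subst σ) (b.subst σ)
  | box a => box (a.subst σ)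
  | dia a => dia (a.subst σ)

end Form

/-- Substitution instances of the axioms of a standard Hilbert axiomatisation
of intuitionistic propositional logic (the axioms are schematic, so all
substitution instances are included). -/
inductive IPLAx : Form → Prop
  | a1 (φ ψ : Form) : IPLAx (φ.imp (ψ.imp φ))
  | a2 (φ ψ χ : Form) : IPLAx ((φ.imp (ψ.imp χ)).imp ((φ.imp ψ).imp (φ.imp χ)))
  | a3 (φ ψ : Form) : IPLAx ((φ.and ψ).imp φ)
  | a4 (φ ψ : Form) : IPLAx ((φ.and ψ).imp ψ)
  | a5 (φ ψ : Form) : IPLAx (φ.imp (ψ.imp (φ.and ψ)))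
  | a6 (φ ψ : Form) : IPLAx (φ.imp (φ.or ψ))
  | a7 (φ ψ : Form) : IPLAx (ψ.imp (φ.or ψ))
  | a8 (φ ψ χ : Form) : IPLAx ((φ.imp χ).imp ((ψ.imp χ).imp ((φ.or ψ).imp χ)))
  | a9 (φ : Form) : IPLAx (Form.bot.imp φ)

/-- Substitution instances of K_□ : □(φ→ψ) → (□φ → □ψ). -/
def KBoxAx (χ : Form) : Prop :=
  ∃ φ ψ : Form, χ = ((φ.imp ψ).box).imp ((φ.box).imp (ψ.box))

/-- Substitution instances of K_◇ : □(φ→ψ) → (◇φ → ◇ψ). -/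
def KDiaAx (χ : Form) : Prop :=
  ∃ φ ψ : Form, χ = ((φ.imp ψ).box).imp ((φ.dia).imp (ψ.dia))

/-- Axiom instances available in the calculus CK ⊕ Ax : instances of IPL
axioms, of K_□, of K_◇, or substitution instances of members of Ax. -/
def AxInst (Ax : Set Form) (φ : Form) : Prop :=
  IPLAx φ ∨ KBoxAx φ ∨ KDiaAx φ ∨ ∃ ψ ∈ Ax, ∃ σ : ℕ → Form, φ = ψ.subst σ

/-- The generalised Hilbert calculus CK ⊕ Ax deriving consecutions Γ ⊢_Ax φ:
rules (Ax), (MP), (Nec) and (El). -/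
inductive Prv (Ax : Set Form) : Set Form → Form → Prop
  | ax {Γ : Set Form} {φ : Form} : AxInst Ax φ → Prv Ax Γ φ
  | mp {Γ : Set Form} {φ ψ : Form} : Prv Ax Γ φ → Prv Ax Γ (φ.imp ψ) → Prv Ax Γ ψ
  | nec {Γ : Set Form} {φ : Form} : Prv Ax ∅ φ → Prv Ax Γ φ.box
  | el {Γ : Set Form} {φ : Form} : φ ∈ Γ → Prv Ax Γ φ

/-- A CK-frame (X, e, ≤, R): ≤ is a preorder, e is ≤-maximal (an "exploding"
world), and e R x iff x = e. -/
structure CKFrame where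
  W : Type
  le : W → W → Prop
  R : W → W → Prop
  e : W
  le_refl : ∀ x : W, le x x
  le_trans : ∀ {x y z : W}, le x y → le y z → le x z
  e_max : ∀ {x : W}, le e x → x = e
  e_R : ∀ x : W, R e x ↔ x = e

/-- A valuation on a CK-frame: each variable gets a ≤-upset containing e. -/
structure Val (F : CKFrame) where
  V : ℕ → F.W → Prop
  mono : ∀ (p : ℕ) {x y : F.W}, F.le x y → V p x → V p y
  at_e : ∀ p : ℕ, V p F.e

/-- The forcing relation M, x ⊩ φ of a CK-model (F, V). -/
def Forces (F : CKFrame) (V : Val F) : Form → F.W → Prop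
  | .var p, x => V.V p x
  | .bot, x => x = F.e
  | .and a b, x => Forces F V a x ∧ Forces F V b x
  | .or a b, x => Forces F V a x ∨ Forces F V b x
  | .imp a b, x => ∀ y : F.W, F.le x y → Forces F V a y → Forces F V b y
  | .box a, x => ∀ y z : F.W, F.le x y → F.R y z → Forces F V a z
  | .dia a, x => ∀ y : F.W, F.le x y → ∃ z : F.W, F.R y z ∧ Forces F V a z

/-- A frame validates the consecution Γ ⊢ φ if in every model on it, every
world forcing all of Γ forces φ. -/
def ValidConseq (F : CKFrame) (Γ : Set Form) (φ : Form) : Prop :=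
  ∀ (V : Val F) (x : F.W), (∀ ψ ∈ Γ, Forces F V ψ x) → Forces F V φ x

/-- A frame validates a formula φ if every world in every model on it forces φ. -/
def ValidForm (F : CKFrame) (φ : Form) : Prop :=
  ∀ (V : Val F) (x : F.W), Forces F V φ x

/-- Γ semantically entails φ on a class 𝓕 of CK-frames. -/
def SemEntails (𝓕 : Set CKFrame) (Γ : Set Form) (φ : Form) : Prop :=
  ∀ F ∈ 𝓕, ValidConseq F Γ φ

/-- The axiom N_◇ : ◇⊥ → ⊥. -/
def NdAx : Form := (Form.bot.dia).imp Form.bot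

/-- The axiom N_◇□ : ◇⊥ → □⊥. -/
def NdbAx : Form := (Form.bot.dia).imp (Form.bot.box)

/-- The axiom C_◇ : ◇(p ∨ q) → ◇p ∨ ◇q. -/
def CdAx : Form :=
  (((Form.var 0).or (Form.var 1)).dia).imp (((Form.var 0).dia).or ((Form.var 1).dia))

/-- The axiom I_◇□ : (◇p → □q) → □(p → q). -/
def IdbAx : Form :=
  (((Form.var 0).dia).imp ((Form.var 1).box)).imp (((Form.var 0).imp (Form.var 1)).box)

/-- (Nd-corr): for all x, if yRe for all y ≥ x, then x = e. -/
def NdCorr (F : CKFrame) : Prop :=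
  ∀ x : F.W, (∀ y : F.W, F.le x y → F.R y F.e) → x = F.e

/-- (Cd-corr). -/
def CdCorr (F : CKFrame) : Prop :=
  ∀ x y z : F.W, ¬ F.R y F.e → ¬ F.R z F.e → F.le x y → F.le x z →
    ∃ w : F.W, F.le x w ∧
      (∀ v : F.W, F.R w v → ∃ u : F.W, F.R y u ∧ F.le v u) ∧
      (∀ v : F.W, F.R w v → ∃ u : F.W, F.R z u ∧ F.le v u)

/-- (Idb-corr). -/
def IdbCorr (F : CKFrame) : Prop :=
  ∀ x y z : F.W, F.R x y → F.le y z → z ≠ F.e →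
    ∃ u w : F.W, F.le x u ∧ F.R u w ∧ F.le w z ∧
      ∀ s : F.W, F.le u s → F.R s F.e ∨ ∃ t : F.W, F.R s t ∧ F.le z t

/-!
Completeness uses a canonical model whose worlds are segments: a prime theory `T` together with a
set of prime theories it sees, all containing `□⁻¹ T` and jointly realising every `◇`-formula of
`T`; the exploding world is the segment on the inconsistent theory. Every prime theory needed comes
from one Zorn argument: the consequences of a set can be kept disjoint from `B` whenever `B` is
upward directed under provable implication. Taking as successors all primes avoiding `φ` refutes
`◇φ` at `T` when `◇φ ∉ T`, and with N_◇ gives (Nd-corr); taking all primes inside `◇⁻¹ T` is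
possible because C_◇ makes `(◇⁻¹ T)ᶜ` directed, and gives the witness of (Cd-corr). For
(Idb-corr), I_◇□ lets one add `◇ c` to a theory whose boxes lie in `c` without adding boxes
outside `c`.
-/

section Soundness

variable {F : CKFrame} {V : Val F}

theorem Forces.mono {φ : Form} {x y : F.W} (hxy : F.le x y) (h : Forces F V φ x) :
    Forces F V φ y := by
  induction φ generalizing x y with
  | var p => exact V.mono p hxy h
  | bot =>
    have hx : x = F.e := h
    exact F.e_max (hx ▸ hxy)
  | and a b iha ihb => exact ⟨iha hxy h.1, ihb hxy h.2⟩
  | or a b iha ihb => exact h.imp (iha hxy) (ihb hxy)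
  | imp a b => exact fun z hyz => h z (F.le_trans hxy hyz)
  | box a => exact fun z u hyz => h z u (F.le_trans hxy hyz)
  | dia a => exact fun z hyz => h z (F.le_trans hxy hyz)

theorem forces_e (φ : Form) : Forces F V φ F.e := by
  induction φ with
  | var p => exact V.at_e p
  | bot => rfl
  | and a b iha ihb => exact ⟨iha, ihb⟩
  | or a b iha => exact Or.inl iha
  | imp a b _ ihb => exact fun y hy _ => F.e_max hy ▸ ihb
  | box a ih => exact fun y z hy hyz => (F.e_R z).1 (F.e_max hy ▸ hyz) ▸ ih
  | dia a ih => exact fun y hy => F.e_max hy ▸ ⟨F.e, (F.e_R F.e).2 rfl, ih⟩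

theorem validForm_of_iplAx {φ : Form} (h : IPLAx φ) : ValidForm F φ := by
  intro V x
  induction h with
  | a1 φ ψ => exact fun y _ hφ z hyz _ => hφ.mono hyz
  | a2 φ ψ χ =>
    exact fun y _ h₁ z hyz h₂ u hzu h₃ =>
      h₁ u (F.le_trans hyz hzu) h₃ u (F.le_refl u) (h₂ u hzu h₃)
  | a3 φ ψ => exact fun _ _ h => h.1
  | a4 φ ψ => exact fun _ _ h => h.2
  | a5 φ ψ => exact fun y _ h₁ z hyz h₂ => ⟨h₁.mono hyz, h₂⟩
  | a6 φ ψ => exact fun _ _ => Or.inl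
  | a7 φ ψ => exact fun _ _ => Or.inr
  | a8 φ ψ χ =>
    exact fun _ _ h₁ _ hyz h₂ u hzu h₃ =>
      h₃.elim (h₁ u (F.le_trans hyz hzu)) (h₂ u hzu)
  | a9 φ =>
    intro y _ h
    have hy : y = F.e := h
    exact hy ▸ forces_e φ

theorem validForm_kbox (φ ψ : Form) :
    ValidForm F (((φ.imp ψ).box).imp ((φ.box).imp (ψ.box))) :=
  fun _ _ _ _ h₁ _ hyz h₂ u v hzu huv =>
    h₁ u v (F.le_trans hyz hzu) huv v (F.le_refl v) (h₂ u v hzu huv)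

theorem validForm_kdia (φ ψ : Form) :
    ValidForm F (((φ.imp ψ).box).imp ((φ.dia).imp (ψ.dia))) := by
  intro _ _ _ _ h₁ _ hyz h₂ u hzu
  obtain ⟨v, huv, hφ⟩ := h₂ u hzu
  exact ⟨v, huv, h₁ u v (F.le_trans hyz hzu) huv v (F.le_refl v) hφ⟩

theorem NdCorr.validForm (hF : NdCorr F) : ValidForm F ((Form.bot.dia).imp Form.bot) := by
  intro _ _ y _ h
  refine hF y fun z hyz => ?_
  obtain ⟨u, hzu, hu⟩ := h z hyz
  have hu : u = F.e := hu
  exact hu ▸ hzu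

theorem CdCorr.validForm (hF : CdCorr F) (φ ψ : Form) :
    ValidForm F (((φ.or ψ).dia).imp ((φ.dia).or (ψ.dia))) := by
  intro V _ y _ h
  by_contra! hn
  obtain ⟨⟨z₁, hyz₁, hz₁⟩, ⟨z₂, hyz₂, hz₂⟩⟩ :
      (∃ z₁, F.le y z₁ ∧ ∀ u, F.R z₁ u → ¬ Forces F V φ u) ∧
      (∃ z₂, F.le y z₂ ∧ ∀ u, F.R z₂ u → ¬ Forces F V ψ u) := by
    simpa [Forces, not_or] using hn
  obtain ⟨w, hyw, hw₁, hw₂⟩ := hF y z₁ z₂ (fun h => hz₁ _ h (forces_e φ))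
    (fun h => hz₂ _ h (forces_e ψ)) hyz₁ hyz₂
  obtain ⟨v, hwv, hv | hv⟩ := h w hyw
  · obtain ⟨u, hz₁u, hvu⟩ := hw₁ v hwv
    exact hz₁ u hz₁u (hv.mono hvu)
  · obtain ⟨u, hz₂u, hvu⟩ := hw₂ v hwv
    exact hz₂ u hz₂u (hv.mono hvu)

theorem IdbCorr.validForm (hF : IdbCorr F) (φ ψ : Form) :
    ValidForm F (((φ.dia).imp (ψ.box)).imp ((φ.imp ψ).box)) := by
  intro V _ y _ h z x hyz hzx x' hxx' hφ
  by_cases he : x' = F.e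
  · exact he ▸ forces_e ψ
  obtain ⟨u, w, hzu, huw, hwx', hu⟩ := hF z x x' hzx hxx' he
  have hdia : Forces F V φ.dia u := fun s hus =>
    (hu s hus).elim (fun hse => ⟨F.e, hse, forces_e φ⟩)
      fun ⟨t, hst, hx't⟩ => ⟨t, hst, hφ.mono hx't⟩
  exact (h u (F.le_trans hyz hzu) hdia u w (F.le_refl u) huw).mono hwx'

theorem validConseq_of_prv {Ax Γ : Set Form} {φ : Form} (hAx : Ax ⊆ {NdAx, CdAx, IdbAx})
    (hNd : NdAx ∈ Ax → NdCorr F) (hCd : CdAx ∈ Ax → CdCorr F) (hIdb : IdbAx ∈ Ax → IdbCorr F)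
    (h : Prv Ax Γ φ) : ValidConseq F Γ φ := by
  induction h with
  | ax h =>
    intro V x _
    obtain h | ⟨φ, ψ, rfl⟩ | ⟨φ, ψ, rfl⟩ | ⟨A, hA, σ, rfl⟩ := h
    · exact validForm_of_iplAx h V x
    · exact validForm_kbox φ ψ V x
    · exact validForm_kdia φ ψ V x
    · rcases hAx hA with rfl | rfl | rfl
      · exact (hNd hA).validForm V x
      · exact (hCd hA).validForm (σ 0) (σ 1) V x
      · exact (hIdb hA).validForm (σ 0) (σ 1) V x
  | mp _ _ ih₁ ih₂ => exact fun V x hx => ih₂ V x hx x (F.le_refl x) (ih₁ V x hx)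
  | nec _ ih => exact fun V _ _ _ z _ _ => ih V z fun _ h => h.elim
  | el h => exact fun _ _ hx => hx _ h

end Soundness

namespace Prv

variable {Ax Γ Δ : Set Form} {φ ψ χ : Form}

theorem ipl (h : IPLAx φ) : Prv Ax Γ φ := .ax (Or.inl h)

theorem kbox (φ ψ : Form) : Prv Ax Γ (((φ.imp ψ).box).imp ((φ.box).imp (ψ.box))) :=
  .ax (Or.inr (Or.inl ⟨φ, ψ, rfl⟩))

theorem kdia (φ ψ : Form) : Prv Ax Γ (((φ.imp ψ).box).imp ((φ.dia).imp (ψ.dia))) :=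
  .ax (Or.inr (Or.inr (Or.inl ⟨φ, ψ, rfl⟩)))

theorem subst_mem {A : Form} (hA : A ∈ Ax) (σ : ℕ → Form) : Prv Ax Γ (A.subst σ) :=
  .ax (Or.inr (Or.inr (Or.inr ⟨A, hA, σ, rfl⟩)))

theorem nd (hNd : NdAx ∈ Ax) : Prv Ax Γ ((Form.bot.dia).imp Form.bot) :=
  subst_mem hNd Form.var

theorem cd (hCd : CdAx ∈ Ax) (φ ψ : Form) :
    Prv Ax Γ (((φ.or ψ).dia).imp ((φ.dia).or (ψ.dia))) :=
  subst_mem hCd fun n => if n = 0 then φ else ψ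

theorem idb (hIdb : IdbAx ∈ Ax) (φ ψ : Form) :
    Prv Ax Γ (((φ.dia).imp (ψ.box)).imp ((φ.imp ψ).box)) :=
  subst_mem hIdb fun n => if n = 0 then φ else ψ

theorem mono (h : Prv Ax Γ φ) (hΓΔ : Γ ⊆ Δ) : Prv Ax Δ φ := by
  induction h generalizing Δ with
  | ax h => exact .ax h
  | mp _ _ ih₁ ih₂ => exact .mp (ih₁ hΓΔ) (ih₂ hΓΔ)
  | nec h => exact .nec h
  | el h => exact .el (hΓΔ h)

theorem cut (h : Prv Ax Γ φ) (hΓ : ∀ γ ∈ Γ, Prv Ax Δ γ) : Prv Ax Δ φ := by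
  induction h generalizing Δ with
  | ax h => exact .ax h
  | mp _ _ ih₁ ih₂ => exact .mp (ih₁ hΓ) (ih₂ hΓ)
  | nec h => exact .nec h
  | el h => exact hΓ _ h

theorem imp_self : Prv Ax Γ (φ.imp φ) :=
  .mp (ipl (.a1 φ φ)) (.mp (ipl (.a1 φ (φ.imp φ))) (ipl (.a2 φ (φ.imp φ) φ)))

theorem deduction (h : Prv Ax (insert φ Γ) ψ) : Prv Ax Γ (φ.imp ψ) := by
  generalize hΔ : insert φ Γ = Δ at h
  induction h with
  | ax h => exact .mp (.ax h) (ipl (.a1 _ _))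
  | mp _ _ ih₁ ih₂ => exact .mp (ih₁ hΔ) (.mp (ih₂ hΔ) (ipl (.a2 _ _ _)))
  | nec h => exact .mp (.nec h) (ipl (.a1 _ _))
  | el h =>
    subst hΔ
    rcases h with rfl | h
    · exact imp_self
    · exact .mp (.el h) (ipl (.a1 _ _))

theorem and_intro (h₁ : Prv Ax Γ φ) (h₂ : Prv Ax Γ ψ) : Prv Ax Γ (φ.and ψ) :=
  .mp h₂ (.mp h₁ (ipl (.a5 φ ψ)))

theorem and_left (h : Prv Ax Γ (φ.and ψ)) : Prv Ax Γ φ := .mp h (ipl (.a3 φ ψ))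

theorem and_right (h : Prv Ax Γ (φ.and ψ)) : Prv Ax Γ ψ := .mp h (ipl (.a4 φ ψ))

theorem or_inl (h : Prv Ax Γ φ) : Prv Ax Γ (φ.or ψ) := .mp h (ipl (.a6 φ ψ))

theorem or_inr (h : Prv Ax Γ ψ) : Prv Ax Γ (φ.or ψ) := .mp h (ipl (.a7 φ ψ))

theorem or_elim (h : Prv Ax Γ (φ.or ψ)) (h₁ : Prv Ax (insert φ Γ) χ)
    (h₂ : Prv Ax (insert ψ Γ) χ) : Prv Ax Γ χ :=
  .mp h (.mp (deduction h₂) (.mp (deduction h₁) (ipl (.a8 φ ψ χ))))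

theorem singleton : Prv Ax {φ} φ := .el rfl

theorem imp_of_singleton (h : Prv Ax {φ} ψ) : Prv Ax Γ (φ.imp ψ) :=
  (deduction (h.mono (Set.singleton_subset_iff.2 (Set.mem_insert φ ∅)))).mono (Set.empty_subset Γ)

theorem box_of_singleton (h : Prv Ax {φ} ψ) : Prv Ax {φ.box} ψ.box :=
  .mp singleton (.mp (.nec h.imp_of_singleton) (kbox φ ψ))

theorem dia_of_singleton (h : Prv Ax {φ} ψ) : Prv Ax {φ.dia} ψ.dia :=
  .mp singleton (.mp (.nec h.imp_of_singleton) (kdia φ ψ))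

theorem singleton_cut (h : Prv Ax {φ} ψ) (hφ : Prv Ax Γ φ) : Prv Ax Γ ψ :=
  h.cut fun _ hγ => hγ ▸ hφ

theorem insert_of_singleton (h : Prv Ax (insert φ Δ) χ) (hψφ : Prv Ax {ψ} φ) :
    Prv Ax (insert ψ Δ) χ := by
  refine h.cut fun γ hγ => ?_
  rcases hγ with rfl | hγ
  · exact hψφ.singleton_cut (.el (Set.mem_insert _ _))
  · exact .el (Set.mem_insert_of_mem _ hγ)

theorem exists_mem_of_sUnion {c : Set (Set Form)} (hne : c.Nonempty)
    (hc : DirectedOn (· ⊆ ·) c) (h : Prv Ax (⋃₀ c) φ) : ∃ T ∈ c, Prv Ax T φ := by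
  obtain ⟨T₀, hT₀⟩ := hne
  generalize hΓ : ⋃₀ c = Γ at h
  induction h with
  | ax h => exact ⟨T₀, hT₀, .ax h⟩
  | mp _ _ ih₁ ih₂ =>
    obtain ⟨T₁, hT₁, h₁⟩ := ih₁ hΓ
    obtain ⟨T₂, hT₂, h₂⟩ := ih₂ hΓ
    obtain ⟨T, hT, h₁T, h₂T⟩ := hc T₁ hT₁ T₂ hT₂
    exact ⟨T, hT, .mp (h₁.mono h₁T) (h₂.mono h₂T)⟩
  | nec h => exact ⟨T₀, hT₀, .nec h⟩
  | el h =>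
    subst hΓ
    obtain ⟨T, hT, hφT⟩ := h
    exact ⟨T, hT, .el hφT⟩

theorem exists_mem_insert_of_union {D : Set Form} (hne : D.Nonempty)
    (hD : DirectedOn (fun α β => Prv Ax {β} α) D) (h : Prv Ax (D ∪ Δ) χ) :
    ∃ δ ∈ D, Prv Ax (insert δ Δ) χ := by
  obtain ⟨δ₀, hδ₀⟩ := hne
  generalize hΓ : D ∪ Δ = Γ at h
  induction h with
  | ax h => exact ⟨δ₀, hδ₀, .ax h⟩
  | mp _ _ ih₁ ih₂ =>
    obtain ⟨δ₁, hδ₁, h₁⟩ := ih₁ hΓ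
    obtain ⟨δ₂, hδ₂, h₂⟩ := ih₂ hΓ
    obtain ⟨δ, hδ, hδδ₁, hδδ₂⟩ := hD δ₁ hδ₁ δ₂ hδ₂
    exact ⟨δ, hδ, .mp (h₁.insert_of_singleton hδδ₁) (h₂.insert_of_singleton hδδ₂)⟩
  | nec h => exact ⟨δ₀, hδ₀, .nec h⟩
  | el h =>
    subst hΓ
    rcases h with h | h
    · exact ⟨_, h, .el (Set.mem_insert _ _)⟩
    · exact ⟨δ₀, hδ₀, .el (Set.mem_insert_of_mem _ h)⟩

end Prv

structure IsTheory (Ax T : Set Form) : Prop where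
  mem_of_prv {φ : Form} : Prv Ax T φ → φ ∈ T

structure IsPrimeTheory (Ax T : Set Form) : Prop extends IsTheory Ax T where
  mem_or_mem {φ ψ : Form} : φ.or ψ ∈ T → φ ∈ T ∨ ψ ∈ T

theorem isPrimeTheory_univ {Ax : Set Form} : IsPrimeTheory Ax Set.univ :=
  ⟨⟨fun _ => trivial⟩, fun _ => Or.inl trivial⟩

namespace IsTheory

variable {Ax T : Set Form}

theorem eq_univ_of_bot_mem (hT : IsTheory Ax T) (h : Form.bot ∈ T) : T = Set.univ :=
  Set.eq_univ_of_forall fun _ => hT.mem_of_prv (.mp (.el h) (.ipl (.a9 _)))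

theorem and_mem_iff (hT : IsTheory Ax T) {φ ψ : Form} : φ.and ψ ∈ T ↔ φ ∈ T ∧ ψ ∈ T :=
  ⟨fun h => ⟨hT.mem_of_prv (Prv.el h).and_left, hT.mem_of_prv (Prv.el h).and_right⟩,
    fun h => hT.mem_of_prv (.and_intro (.el h.1) (.el h.2))⟩

theorem nonempty (hT : IsTheory Ax T) : T.Nonempty :=
  ⟨_, hT.mem_of_prv (Prv.imp_self (φ := Form.bot))⟩

theorem directedOn (hT : IsTheory Ax T) : DirectedOn (fun α β => Prv Ax {β} α) T :=
  fun α hα β hβ => ⟨α.and β, hT.mem_of_prv (.and_intro (.el hα) (.el hβ)),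
    Prv.singleton.and_left, Prv.singleton.and_right⟩

theorem boxInv (hT : IsTheory Ax T) : IsTheory Ax (Form.box ⁻¹' T) := by
  suffices ∀ {Γ φ}, Prv Ax Γ φ → Γ ⊆ Form.box ⁻¹' T → φ.box ∈ T from
    ⟨fun h => this h subset_rfl⟩
  intro Γ φ h hΓ
  induction h with
  | ax h => exact hT.mem_of_prv (.nec (.ax h))
  | mp _ _ ih₁ ih₂ =>
    exact hT.mem_of_prv (.mp (.el (ih₁ hΓ)) (.mp (.el (ih₂ hΓ)) (.kbox _ _)))
  | nec h => exact hT.mem_of_prv (.nec (.nec h))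
  | el h => exact hΓ h

theorem dia_mem_of_prv_insert (hT : IsTheory Ax T) {δ γ : Form} (hδ : δ.dia ∈ T)
    (h : Prv Ax (insert δ (Form.box ⁻¹' T)) γ) : γ.dia ∈ T :=
  hT.mem_of_prv (.mp (.el hδ) (.mp (.el (hT.boxInv.mem_of_prv h.deduction)) (.kdia δ γ)))

theorem dia_mem_of_prv_union (hT : IsTheory Ax T) {g : Set Form} (hg : IsTheory Ax g)
    (hgT : g ⊆ Form.dia ⁻¹' T) {γ : Form} (h : Prv Ax (g ∪ Form.box ⁻¹' T) γ) :
    γ.dia ∈ T := by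
  obtain ⟨δ, hδ, hδγ⟩ := Prv.exists_mem_insert_of_union hg.nonempty hg.directedOn h
  exact hT.dia_mem_of_prv_insert (hgT hδ) hδγ

end IsTheory

theorem IsPrimeTheory.or_mem_iff {Ax T : Set Form} (hT : IsPrimeTheory Ax T) {φ ψ : Form} :
    φ.or ψ ∈ T ↔ φ ∈ T ∨ ψ ∈ T :=
  ⟨hT.mem_or_mem, fun h => h.elim (fun h => hT.mem_of_prv (Prv.el h).or_inl)
    (fun h => hT.mem_of_prv (Prv.el h).or_inr)⟩

section PrimeExtension

variable {Ax : Set Form}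

theorem Prv.directedOn_singleton (φ : Form) : DirectedOn (fun α β => Prv Ax {α} β) {φ} := by
  rintro _ rfl _ rfl
  exact ⟨_, rfl, .singleton, .singleton⟩

theorem exists_isPrimeTheory_superset {Γ B : Set Form}
    (hB : DirectedOn (fun α β => Prv Ax {α} β) B) (hΓ : ∀ γ, Prv Ax Γ γ → γ ∉ B) :
    ∃ T, Γ ⊆ T ∧ IsPrimeTheory Ax T ∧ Disjoint T B := by
  set S := {T : Set Form | Γ ⊆ T ∧ ∀ γ, Prv Ax T γ → γ ∉ B}
  obtain ⟨M, hΓM, ⟨-, hMB⟩, hmax⟩ := zorn_subset_nonempty S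
    (fun c hcS hc hne => by
      refine ⟨⋃₀ c, ⟨?_, fun γ hγ => ?_⟩, fun _ => Set.subset_sUnion_of_mem⟩
      · obtain ⟨T, hT⟩ := hne
        exact (hcS hT).1.trans (Set.subset_sUnion_of_mem hT)
      · obtain ⟨T, hT, hγ⟩ := Prv.exists_mem_of_sUnion hne hc.directedOn hγ
        exact (hcS hT).2 γ hγ)
    Γ ⟨subset_rfl, hΓ⟩
  have escape : ∀ α ∉ M, ∃ γ ∈ B, Prv Ax (insert α M) γ := by
    intro α hα
    by_contra! h
    exact hα (hmax ⟨hΓM.trans (Set.subset_insert α M), fun γ hγ hγB => h γ hγB hγ⟩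
      (Set.subset_insert α M) (Set.mem_insert α M))
  have hM : IsTheory Ax M := by
    refine ⟨fun {α} hα => ?_⟩
    by_contra hαM
    obtain ⟨γ, hγB, hγ⟩ := escape α hαM
    refine hMB γ (hγ.cut fun β hβ => ?_) hγB
    rcases hβ with rfl | hβ
    exacts [hα, .el hβ]
  refine ⟨M, hΓM, ⟨hM, fun {α β} hαβ => ?_⟩,
    Set.disjoint_left.2 fun γ hγ => hMB γ (.el hγ)⟩
  by_contra! ⟨hα, hβ⟩
  obtain ⟨γα, hγαB, hγα⟩ := escape α hα
  obtain ⟨γβ, hγβB, hγβ⟩ := escape β hβ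
  obtain ⟨γ, hγB, hαγ, hβγ⟩ := hB γα hγαB γβ hγβB
  exact hMB γ (.or_elim (.el hαβ) (hαγ.singleton_cut hγα) (hβγ.singleton_cut hγβ)) hγB

theorem exists_isPrimeTheory_not_mem {Γ : Set Form} {φ : Form} (h : ¬ Prv Ax Γ φ) :
    ∃ T, Γ ⊆ T ∧ IsPrimeTheory Ax T ∧ φ ∉ T := by
  obtain ⟨T, hΓT, hT, hTφ⟩ := exists_isPrimeTheory_superset (Prv.directedOn_singleton φ)
    fun γ hγ hγφ => h (Set.mem_singleton_iff.1 hγφ ▸ hγ)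
  exact ⟨T, hΓT, hT, Set.disjoint_right.1 hTφ rfl⟩

theorem directedOn_compl_diaInv (hCd : CdAx ∈ Ax) {T : Set Form} (hT : IsPrimeTheory Ax T) :
    DirectedOn (fun α β => Prv Ax {α} β) (Form.dia ⁻¹' T)ᶜ := by
  intro α hα β hβ
  refine ⟨α.or β, fun hαβ => ?_, Prv.singleton.or_inl, Prv.singleton.or_inr⟩
  rcases hT.mem_or_mem (hT.mem_of_prv (.mp (.el hαβ) (.cd hCd α β))) with h | h
  exacts [hα h, hβ h]

theorem exists_isPrimeTheory_of_idbAx (hIdb : IdbAx ∈ Ax) {a c : Set Form}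
    (ha : IsTheory Ax a) (hc : IsPrimeTheory Ax c) (hac : Form.box ⁻¹' a ⊆ c) :
    ∃ b, IsPrimeTheory Ax b ∧ a ⊆ b ∧ c ⊆ Form.dia ⁻¹' b ∧ Form.box ⁻¹' b ⊆ c := by
  have hdir : DirectedOn (fun α β => Prv Ax {α} β) (Form.box '' cᶜ) := by
    rintro _ ⟨ψ, hψ, rfl⟩ _ ⟨χ, hχ, rfl⟩
    refine ⟨(ψ.or χ).box, ⟨ψ.or χ, fun h => ?_, rfl⟩,
      Prv.box_of_singleton Prv.singleton.or_inl, Prv.box_of_singleton Prv.singleton.or_inr⟩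
    rcases hc.mem_or_mem h with h | h
    exacts [hψ h, hχ h]
  have hbase : ∀ γ, Prv Ax (Form.dia '' c ∪ a) γ → γ ∉ Form.box '' cᶜ := by
    rintro _ h ⟨ψ, hψ, rfl⟩
    have hne : (Form.dia '' c).Nonempty := hc.nonempty.image _
    have hD : DirectedOn (fun α β => Prv Ax {β} α) (Form.dia '' c) := by
      rintro _ ⟨θ, hθ, rfl⟩ _ ⟨χ, hχ, rfl⟩
      obtain ⟨δ, hδ, hδθ, hδχ⟩ := hc.directedOn θ hθ χ hχ
      exact ⟨δ.dia, ⟨δ, hδ, rfl⟩, hδθ.dia_of_singleton, hδχ.dia_of_singleton⟩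
    obtain ⟨_, ⟨θ, hθ, rfl⟩, hθψ⟩ := Prv.exists_mem_insert_of_union hne hD h
    have hθψ : (θ.imp ψ).box ∈ a := ha.mem_of_prv (.mp hθψ.deduction (.idb hIdb θ ψ))
    exact hψ (hc.mem_of_prv (.mp (.el hθ) (.el (hac hθψ))))
  obtain ⟨b, hb, hbp, hbc⟩ := exists_isPrimeTheory_superset hdir hbase
  exact ⟨b, hbp, Set.subset_union_right.trans hb,
    fun φ hφ => hb (Set.mem_union_left _ ⟨φ, hφ, rfl⟩),
    fun ψ hψ => by_contra fun hψc => Set.disjoint_left.1 hbc hψ ⟨ψ, hψc, rfl⟩⟩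

end PrimeExtension

/-- `exists_superset` is what makes (Cd-corr) and (Idb-corr) hold in the canonical frame. -/
@[ext]
structure Segment (Ax : Set Form) where
  head : Set Form
  succs : Set (Set Form)
  head_prime : IsPrimeTheory Ax head
  succs_prime : ∀ u ∈ succs, IsPrimeTheory Ax u
  boxInv_subset : ∀ u ∈ succs, Form.box ⁻¹' head ⊆ u
  exists_mem : ∀ χ ∈ Form.dia ⁻¹' head, ∃ u ∈ succs, χ ∈ u
  exists_superset : ∀ g, IsPrimeTheory Ax g → g ⊆ Form.dia ⁻¹' head → ∃ u ∈ succs, g ⊆ u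

namespace Segment

variable {Ax : Set Form}

def avoiding (T : Set Form) (hT : IsPrimeTheory Ax T) (B : Set Form)
    (hB : DirectedOn (fun α β => Prv Ax {α} β) B) (hTB : Disjoint (Form.dia ⁻¹' T) B) :
    Segment Ax where
  head := T
  succs := {u | IsPrimeTheory Ax u ∧ Form.box ⁻¹' T ⊆ u ∧ Disjoint u B}
  head_prime := hT
  succs_prime _ hu := hu.1
  boxInv_subset _ hu := hu.2.1
  exists_mem χ hχ := by
    obtain ⟨u, hχu, hu, huB⟩ := exists_isPrimeTheory_superset hB fun γ hγ =>
      Set.disjoint_left.1 hTB (hT.dia_mem_of_prv_insert hχ hγ)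
    exact ⟨u, ⟨hu, (Set.subset_insert _ _).trans hχu, huB⟩, hχu (Set.mem_insert _ _)⟩
  exists_superset g hg hgT := by
    obtain ⟨u, hgu, hu, huB⟩ := exists_isPrimeTheory_superset hB fun γ hγ =>
      Set.disjoint_left.1 hTB (hT.dia_mem_of_prv_union hg.toIsTheory hgT hγ)
    exact ⟨u, ⟨hu, Set.subset_union_right.trans hgu, huB⟩, Set.subset_union_left.trans hgu⟩

def ofPrime (T : Set Form) (hT : IsPrimeTheory Ax T) : Segment Ax :=
  avoiding T hT ∅ (fun _ h => h.elim) (Set.disjoint_empty _)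

def univ : Segment Ax := ofPrime Set.univ isPrimeTheory_univ

theorem succs_eq_of_head_eq_univ {s : Segment Ax} (h : s.head = Set.univ) :
    s.succs = {Set.univ} := by
  refine Set.eq_singleton_iff_unique_mem.2 ⟨?_, fun u hu =>
    Set.eq_univ_of_forall fun ψ => s.boxInv_subset u hu (by simp [h])⟩
  obtain ⟨u, hu, hbot⟩ := s.exists_mem Form.bot (by simp [h])
  rwa [← (s.succs_prime u hu).eq_univ_of_bot_mem hbot]

theorem eq_univ_of_head_eq_univ {s : Segment Ax} (h : s.head = Set.univ) : s = univ :=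
  Segment.ext h ((succs_eq_of_head_eq_univ h).trans (succs_eq_of_head_eq_univ rfl).symm)

theorem eq_univ_iff_bot_mem (s : Segment Ax) : s = univ ↔ Form.bot ∈ s.head :=
  ⟨fun h => h ▸ trivial,
    fun h => eq_univ_of_head_eq_univ (s.head_prime.eq_univ_of_bot_mem h)⟩

theorem exists_succ_superset (s : Segment Ax) {g : Set Form} (hg : IsPrimeTheory Ax g)
    (hgs : g ⊆ Form.dia ⁻¹' s.head) : ∃ u : Segment Ax, u.head ∈ s.succs ∧ g ⊆ u.head := by
  obtain ⟨u, hu, hgu⟩ := s.exists_superset g hg hgs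
  exact ⟨ofPrime u (s.succs_prime u hu), hu, hgu⟩

end Segment

def canonicalFrame (Ax : Set Form) : CKFrame where
  W := Segment Ax
  le x y := x.head ⊆ y.head
  R x y := y.head ∈ x.succs
  e := Segment.univ
  le_refl _ := subset_rfl
  le_trans := Set.Subset.trans
  e_max h := Segment.eq_univ_of_head_eq_univ (Set.univ_subset_iff.1 h)
  e_R x := by
    show x.head ∈ Segment.univ.succs ↔ _
    rw [Segment.succs_eq_of_head_eq_univ rfl, Set.mem_singleton_iff]
    exact ⟨Segment.eq_univ_of_head_eq_univ, fun h => h ▸ rfl⟩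

def canonicalVal (Ax : Set Form) : Val (canonicalFrame Ax) where
  V p w := Form.var p ∈ w.head
  mono _ _ _ h hx := h hx
  at_e _ := trivial

section Canonical

variable {Ax : Set Form}

theorem forces_canonical_iff (φ : Form) (w : Segment Ax) :
    Forces (canonicalFrame Ax) (canonicalVal Ax) φ w ↔ φ ∈ w.head := by
  induction φ generalizing w with
  | var p => rfl
  | bot => exact w.eq_univ_iff_bot_mem
  | and a b iha ihb =>
    simp only [Forces, iha, ihb, w.head_prime.and_mem_iff]
  | or a b iha ihb =>
    simp only [Forces, iha, ihb, w.head_prime.or_mem_iff]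
  | imp a b iha ihb =>
    refine ⟨fun h => by_contra fun hab => ?_, fun h y hwy ha => (ihb y).2
      (y.head_prime.mem_of_prv (.mp (.el ((iha y).1 ha)) (.el (hwy h))))⟩
    obtain ⟨T, hwT, hT, hbT⟩ := exists_isPrimeTheory_not_mem fun hp =>
      hab (w.head_prime.mem_of_prv hp.deduction)
    exact hbT ((ihb _).1 (h (.ofPrime T hT) ((Set.subset_insert _ _).trans hwT)
      ((iha _).2 (hwT (Set.mem_insert _ _)))))
  | box a ih =>
    refine ⟨fun h => by_contra fun ha => ?_,
      fun h y z hwy hyz => (ih z).2 (y.boxInv_subset _ hyz (hwy h))⟩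
    obtain ⟨T, hwT, hT, haT⟩ := exists_isPrimeTheory_not_mem fun hp =>
      ha (w.head_prime.boxInv.mem_of_prv hp)
    exact haT ((ih _).1 (h (.ofPrime w.head w.head_prime) (.ofPrime T hT) subset_rfl
      ⟨hT, hwT, Set.disjoint_empty _⟩))
  | dia a ih =>
    refine ⟨fun h => by_contra fun ha => ?_, fun h y hwy => ?_⟩
    · obtain ⟨z, hz, haz⟩ := h (.avoiding w.head w.head_prime {a} (Prv.directedOn_singleton a)
        (Set.disjoint_singleton_right.2 ha)) subset_rfl
      exact Set.disjoint_left.1 hz.2.2 ((ih z).1 haz) rfl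
    · obtain ⟨u, hu, hau⟩ := y.exists_mem a (hwy h)
      exact ⟨.ofPrime u (y.succs_prime u hu), hu, (ih _).2 hau⟩

theorem prv_of_validConseq_canonicalFrame {Γ : Set Form} {φ : Form}
    (h : ValidConseq (canonicalFrame Ax) Γ φ) : Prv Ax Γ φ := by
  by_contra hΓφ
  obtain ⟨T, hΓT, hT, hφT⟩ := exists_isPrimeTheory_not_mem hΓφ
  refine hφT ((forces_canonical_iff φ (.ofPrime T hT)).1 (h (canonicalVal Ax) _ fun ψ hψ => ?_))
  exact (forces_canonical_iff ψ _).2 (hΓT hψ)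

theorem ndCorr_canonicalFrame (hNd : NdAx ∈ Ax) : NdCorr (canonicalFrame Ax) := by
  intro w h
  by_contra hw
  have hbot : Form.bot.dia ∉ w.head := fun hd =>
    hw (w.eq_univ_iff_bot_mem.2 (w.head_prime.mem_of_prv (.mp (.el hd) (.nd hNd))))
  have hR := h (.avoiding w.head w.head_prime {Form.bot} (Prv.directedOn_singleton _)
    (Set.disjoint_singleton_right.2 hbot)) subset_rfl
  exact Set.disjoint_left.1 hR.2.2 trivial rfl

theorem cdCorr_canonicalFrame (hCd : CdAx ∈ Ax) : CdCorr (canonicalFrame Ax) := by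
  intro x y z _ _ hxy hxz
  refine ⟨.avoiding x.head x.head_prime (Form.dia ⁻¹' x.head)ᶜ
    (directedOn_compl_diaInv hCd x.head_prime) disjoint_compl_right, subset_rfl,
    fun v hv => ?_, fun v hv => ?_⟩
  · exact y.exists_succ_superset v.head_prime
      ((Set.disjoint_compl_right_iff_subset.1 hv.2.2).trans (Set.preimage_mono hxy))
  · exact z.exists_succ_superset v.head_prime
      ((Set.disjoint_compl_right_iff_subset.1 hv.2.2).trans (Set.preimage_mono hxz))

theorem idbCorr_canonicalFrame (hIdb : IdbAx ∈ Ax) : IdbCorr (canonicalFrame Ax) := by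
  intro x y z hxy hyz _
  obtain ⟨b, hb, hxb, hzb, hbz⟩ := exists_isPrimeTheory_of_idbAx hIdb
    x.head_prime.toIsTheory z.head_prime fun ψ hψ => hyz (x.boxInv_subset _ hxy hψ)
  refine ⟨.ofPrime b hb, z, hxb, ⟨z.head_prime, hbz, Set.disjoint_empty _⟩, subset_rfl,
    fun s hs => Or.inr ?_⟩
  exact s.exists_succ_superset z.head_prime (hzb.trans (Set.preimage_mono hs))

end Canonical

/-- Soundness and strong completeness w.r.t. correspondence conditions: for
Ax ⊆ {N_◇, C_◇, I_◇□} and 𝓕 the class of CK-frames satisfying (A-corr) for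
each A ∈ Ax, semantic entailment on 𝓕 coincides with derivability in CK ⊕ Ax. -/
theorem corr_sound_strong_complete (Ax : Set Form)
    (hAx : Ax ⊆ {NdAx, CdAx, IdbAx}) (𝓕 : Set CKFrame)
    (h𝓕 : 𝓕 = {F : CKFrame |
      (NdAx ∈ Ax → NdCorr F) ∧ (CdAx ∈ Ax → CdCorr F) ∧ (IdbAx ∈ Ax → IdbCorr F)})
    (Γ : Set Form) (φ : Form) :
    SemEntails 𝓕 Γ φ ↔ Prv Ax Γ φ := by
  subst h𝓕
  refine ⟨fun h => prv_of_validConseq_canonicalFrame (h _ ?_), fun h F hF =>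
    validConseq_of_prv hAx hF.1 hF.2.1 hF.2.2 h⟩
  exact ⟨ndCorr_canonicalFrame, cdCorr_canonicalFrame, idbCorr_canonicalFrame⟩
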